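/- arXiv:1511.05245 — 2 statements merged into one kernel-verified Lean document; each statement's English description precedes it below -/
import Mathlib

section
/- Let a, b ∈ ℝ and work in the dual numbers ℝ[ε] = ℝ ⊕ ℝε with ε² = 0. Set A = a + bε and τ(x, t) = 1 + exp(2Ax + 2A³t) ∈ ℝ[ε], and write τ(x, t) = τ₀(x, t) + τ₁(x, t)ε for its components (so τ₀(x, t) = 1 + e^{2ax + 2a³t} > 0). Then the functions v := ∂_x²( log τ₀ ) and w := ∂_x²( τ₁ / τ₀ ) satisfy the coupled KdV equations 4 v_t − 12 v v_x − v_{xxx} = 0 and 4 w_t − 12 (v w)_x − w_{xxx} = 0. -/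
/-!
With `u = 2ax + 2a³t` and `s = 2bx + 6a²bt` the exponent `2Ax + 2A³t` equals `u + sε`, so
`τ₀ = 1 + eᵘ` and `τ₁ = s eᵘ`. Hence `∂ₓ log τ₀ = 2a σ(u)` and `τ₁ / τ₀ = s σ(u)`, where `σ` is the
logistic sigmoid. Because `σ' = σ (1 - σ)`, every function `P(σ(u)) + s R(σ(u))` with polynomials
`P`, `R` has partial derivatives of the same shape, with new polynomials computed from `P` and `R`.
So all terms of both equations are of this shape, and each equation becomes a polynomial identity
in `σ(u)`.
-/

open TrivSqZeroExt

/-- Partial derivative in the `x`-direction of a function of `(x, t) : ℝ × ℝ`. -/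
noncomputable def pdX (f : ℝ × ℝ → ℝ) : ℝ × ℝ → ℝ :=
  fun p => lineDeriv ℝ f p (1, 0)

/-- Partial derivative in the `t`-direction. -/
noncomputable def pdT (f : ℝ × ℝ → ℝ) : ℝ × ℝ → ℝ :=
  fun p => lineDeriv ℝ f p (0, 1)

open Polynomial Real

lemma exp_div_one_add_exp (u : ℝ) : exp u / (1 + exp u) = sigmoid u := by
  rw [sigmoid_def, exp_neg]
  field_simp
  ring

lemma hasDerivAt_log_one_add_exp (u : ℝ) :
    HasDerivAt (fun u => log (1 + exp u)) (sigmoid u) u := by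
  have h := ((hasDerivAt_exp u).const_add 1).log (by positivity)
  rwa [← exp_div_one_add_exp]

noncomputable def sigmoidDerivative (P : ℝ[X]) : ℝ[X] := X * (1 - X) * derivative P

lemma hasDerivAt_eval_sigmoid (P : ℝ[X]) (u : ℝ) :
    HasDerivAt (fun u => P.eval (sigmoid u)) ((sigmoidDerivative P).eval (sigmoid u)) u := by
  refine ((P.hasDerivAt (sigmoid u)).comp u (hasDerivAt_sigmoid u)).congr_deriv ?_
  simp only [sigmoidDerivative, eval_mul, eval_sub, eval_one, eval_X]
  ring

section SigmoidForm

variable {E : Type*} [AddCommGroup E] [Module ℝ E] (φ ψ : E →ₗ[ℝ] ℝ)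

lemma LinearMap.hasDerivAt_apply_add_smul (χ : E →ₗ[ℝ] ℝ) (x v : E) :
    HasDerivAt (fun t : ℝ => χ (x + t • v)) (χ v) 0 := by
  simp only [map_add, map_smul, smul_eq_mul]
  simpa using ((hasDerivAt_id (0 : ℝ)).mul_const (χ v)).const_add (χ x)

lemma lineDeriv_log_one_add_exp (x v : E) :
    lineDeriv ℝ (fun y => log (1 + exp (φ y))) x v = φ v * sigmoid (φ x) :=
  HasLineDerivAt.lineDeriv <|
    ((hasDerivAt_log_one_add_exp (φ x)).comp_of_eq 0 (φ.hasDerivAt_apply_add_smul x v)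
      (by simp)).congr_deriv (mul_comm _ _)

noncomputable def sigmoidForm (P R : ℝ[X]) (x : E) : ℝ :=
  P.eval (sigmoid (φ x)) + ψ x * R.eval (sigmoid (φ x))

lemma hasLineDerivAt_sigmoidForm (P R : ℝ[X]) (x v : E) :
    HasLineDerivAt ℝ (sigmoidForm φ ψ P R)
      (sigmoidForm φ ψ (C (φ v) * sigmoidDerivative P + C (ψ v) * R)
        (C (φ v) * sigmoidDerivative R) x) x v := by
  have hφ := φ.hasDerivAt_apply_add_smul x v
  have hP := (hasDerivAt_eval_sigmoid P (φ x)).comp_of_eq 0 hφ (by simp)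
  have hR := (hasDerivAt_eval_sigmoid R (φ x)).comp_of_eq 0 hφ (by simp)
  unfold HasLineDerivAt sigmoidForm
  convert hP.add ((ψ.hasDerivAt_apply_add_smul x v).mul hR) using 1
  · ext t
    simp
  · simp only [sigmoidDerivative, eval_add, eval_mul, eval_C, eval_X, eval_sub, eval_one, map_add,
      map_smul, smul_eq_mul, Function.comp_apply, zero_mul, add_zero, zero_smul]
    ring

lemma lineDeriv_sigmoidForm (P R : ℝ[X]) (v : E) :
    (fun x => lineDeriv ℝ (sigmoidForm φ ψ P R) x v) =
      sigmoidForm φ ψ (C (φ v) * sigmoidDerivative P + C (ψ v) * R)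
        (C (φ v) * sigmoidDerivative R) :=
  funext fun x => (hasLineDerivAt_sigmoidForm φ ψ P R x v).lineDeriv

lemma sigmoidForm_mul (P Q R : ℝ[X]) :
    (fun x => sigmoidForm φ ψ P 0 x * sigmoidForm φ ψ Q R x) =
      sigmoidForm φ ψ (P * Q) (P * R) := by
  funext x
  simp only [sigmoidForm, eval_mul, eval_zero]
  ring

end SigmoidForm

lemma pdX_sigmoidForm (φ ψ : ℝ × ℝ →ₗ[ℝ] ℝ) (P R : ℝ[X]) :
    pdX (sigmoidForm φ ψ P R) =
      sigmoidForm φ ψ (C (φ (1, 0)) * sigmoidDerivative P + C (ψ (1, 0)) * R)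
        (C (φ (1, 0)) * sigmoidDerivative R) :=
  lineDeriv_sigmoidForm φ ψ P R (1, 0)

lemma pdT_sigmoidForm (φ ψ : ℝ × ℝ →ₗ[ℝ] ℝ) (P R : ℝ[X]) :
    pdT (sigmoidForm φ ψ P R) =
      sigmoidForm φ ψ (C (φ (0, 1)) * sigmoidDerivative P + C (ψ (0, 1)) * R)
        (C (φ (0, 1)) * sigmoidDerivative R) :=
  lineDeriv_sigmoidForm φ ψ P R (0, 1)

noncomputable def solitonPhase (a : ℝ) : ℝ × ℝ →ₗ[ℝ] ℝ :=
  (2 * a) • LinearMap.fst ℝ ℝ ℝ + (2 * a ^ 3) • LinearMap.snd ℝ ℝ ℝ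

/-- `b` times the derivative of `solitonPhase a` in `a`: the `ε`-part of `2Ax + 2A³t`. -/
noncomputable def solitonPhaseVariation (a b : ℝ) : ℝ × ℝ →ₗ[ℝ] ℝ :=
  (2 * b) • LinearMap.fst ℝ ℝ ℝ + (6 * a ^ 2 * b) • LinearMap.snd ℝ ℝ ℝ

lemma solitonPhase_apply (a : ℝ) (p : ℝ × ℝ) :
    solitonPhase a p = 2 * a * p.1 + 2 * a ^ 3 * p.2 :=
  rfl

lemma solitonPhaseVariation_apply (a b : ℝ) (p : ℝ × ℝ) :
    solitonPhaseVariation a b p = 2 * b * p.1 + 6 * a ^ 2 * b * p.2 :=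
  rfl

lemma DualNumber.exp_inl_add_inr (u s : ℝ) :
    NormedSpace.exp (inl u + inr s : DualNumber ℝ) = inl (exp u) + inr (exp u * s) := by
  rw [exp_def]
  simp [Real.exp_eq_exp_ℝ]

lemma one_add_exp_dual_soliton (a b : ℝ) (p : ℝ × ℝ) :
    1 + NormedSpace.exp
        ((2 * p.1) • (inl a + inr b : DualNumber ℝ) + (2 * p.2) • (inl a + inr b) ^ 3) =
      inl (1 + exp (solitonPhase a p)) +
          inr (exp (solitonPhase a p) * solitonPhaseVariation a b p) := by
  have hexponent : (2 * p.1) • (inl a + inr b : DualNumber ℝ) + (2 * p.2) • (inl a + inr b) ^ 3 =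
      inl (solitonPhase a p) + inr (solitonPhaseVariation a b p) := by
    rw [solitonPhase_apply, solitonPhaseVariation_apply]
    ext
    · simp only [fst_add, fst_smul, fst_pow, fst_inl, fst_inr, smul_eq_mul, add_zero]
      ring
    · simp only [snd_add, snd_smul, snd_pow, fst_add, fst_inl, fst_inr, snd_inl, snd_inr,
        smul_eq_mul, add_zero, zero_add, nsmul_eq_mul, Nat.pred_eq_sub_one, Nat.cast_ofNat]
      ring
  rw [hexponent, DualNumber.exp_inl_add_inr]
  ext <;> simp

noncomputable def kdvLhs (v : ℝ × ℝ → ℝ) (p : ℝ × ℝ) : ℝ :=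
  4 * pdT v p - 12 * (v p * pdX v p) - pdX (pdX (pdX v)) p

noncomputable def linearizedKdvLhs (v w : ℝ × ℝ → ℝ) (p : ℝ × ℝ) : ℝ :=
  4 * pdT w p - 12 * pdX (fun q => v q * w q) p - pdX (pdX (pdX w)) p

section Soliton

variable (a b : ℝ)

lemma pdX_pdX_log_one_add_exp_solitonPhase :
    pdX (pdX fun p => log (1 + exp (solitonPhase a p))) =
      sigmoidForm (solitonPhase a) (solitonPhaseVariation a b) (C (4 * a ^ 2) * (X - X ^ 2)) 0 := by
  have hlog : pdX (fun p => log (1 + exp (solitonPhase a p))) =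
      sigmoidForm (solitonPhase a) (solitonPhaseVariation a b)
        (C (solitonPhase a (1, 0)) * X) 0 := by
    funext p
    simp [pdX, lineDeriv_log_one_add_exp, sigmoidForm]
  rw [hlog, pdX_sigmoidForm]
  funext p
  simp only [sigmoidForm, sigmoidDerivative, derivative_mul, derivative_C, derivative_X,
    derivative_zero, eval_mul, eval_add, eval_sub, eval_pow, eval_C, eval_X, eval_one, eval_zero,
    solitonPhase_apply, solitonPhaseVariation_apply]
  ring

lemma pdX_pdX_exp_mul_div_one_add_exp_solitonPhase :
    pdX (pdX fun p =>
        exp (solitonPhase a p) * solitonPhaseVariation a b p / (1 + exp (solitonPhase a p))) =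
      sigmoidForm (solitonPhase a) (solitonPhaseVariation a b) (C (8 * a * b) * (X - X ^ 2))
        (C (4 * a ^ 2) * (X - 3 * X ^ 2 + 2 * X ^ 3)) := by
  have hquot : (fun p =>
        exp (solitonPhase a p) * solitonPhaseVariation a b p / (1 + exp (solitonPhase a p))) =
      sigmoidForm (solitonPhase a) (solitonPhaseVariation a b) 0 X := by
    funext p
    simp only [sigmoidForm, ← exp_div_one_add_exp, eval_zero, eval_X]
    ring
  rw [hquot, pdX_sigmoidForm, pdX_sigmoidForm]
  funext p
  simp only [sigmoidForm, sigmoidDerivative, derivative_mul, derivative_add, derivative_sub,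
    derivative_C, derivative_X, derivative_one, derivative_zero, eval_mul, eval_add, eval_sub,
    eval_pow, eval_C, eval_X, eval_one, eval_zero, eval_ofNat, solitonPhase_apply,
    solitonPhaseVariation_apply]
  ring

lemma kdvLhs_sigmoidForm_solitonPhase (p : ℝ × ℝ) :
    kdvLhs (sigmoidForm (solitonPhase a) (solitonPhaseVariation a b)
      (C (4 * a ^ 2) * (X - X ^ 2)) 0) p = 0 := by
  simp only [kdvLhs, pdX_sigmoidForm, pdT_sigmoidForm, sigmoidForm, sigmoidDerivative,
    derivative_mul, derivative_add, derivative_sub, derivative_C, derivative_X,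
    derivative_X_pow_succ, pow_zero, derivative_one, derivative_zero, eval_mul, eval_add,
    eval_sub, eval_pow, eval_C, eval_X, eval_one, eval_zero, solitonPhase_apply,
    solitonPhaseVariation_apply]
  ring

lemma linearizedKdvLhs_sigmoidForm_solitonPhase (p : ℝ × ℝ) :
    linearizedKdvLhs
      (sigmoidForm (solitonPhase a) (solitonPhaseVariation a b) (C (4 * a ^ 2) * (X - X ^ 2)) 0)
      (sigmoidForm (solitonPhase a) (solitonPhaseVariation a b) (C (8 * a * b) * (X - X ^ 2))
        (C (4 * a ^ 2) * (X - 3 * X ^ 2 + 2 * X ^ 3))) p = 0 := by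
  rw [linearizedKdvLhs, sigmoidForm_mul]
  simp only [pdX_sigmoidForm, pdT_sigmoidForm, sigmoidForm, sigmoidDerivative, derivative_mul,
    derivative_add, derivative_sub, derivative_C, derivative_X, derivative_X_pow_succ, pow_zero,
    derivative_one, derivative_zero, derivative_ofNat, eval_mul, eval_add, eval_sub, eval_pow,
    eval_C, eval_X, eval_one, eval_zero, eval_ofNat, solitonPhase_apply,
    solitonPhaseVariation_apply]
  ring

end Soliton

/-- let `A = a + bε` in the dual numbers `ℝ[ε]`, let
`τ(x,t) = 1 + exp(2Ax + 2A³t)` with components `τ = τ₀ + τ₁ ε`.  Then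
`v := ∂_x²(log τ₀)` and `w := ∂_x²(τ₁/τ₀)` satisfy the coupled KdV equations
`4v_t − 12vv_x − v_{xxx} = 0` and `4w_t − 12(vw)_x − w_{xxx} = 0`. -/
theorem stmt4 (a b : ℝ)
    (A : DualNumber ℝ) (hA : A = inl a + inr b)
    (τ : ℝ × ℝ → DualNumber ℝ)
    (hτ : τ = fun p => 1 + NormedSpace.exp ((2 * p.1) • A + (2 * p.2) • A ^ 3))
    (τ₀ τ₁ : ℝ × ℝ → ℝ)
    (hτ₀ : τ₀ = fun p => fst (τ p)) (hτ₁ : τ₁ = fun p => snd (τ p))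
    (v w : ℝ × ℝ → ℝ)
    (hv : v = pdX (pdX fun p => Real.log (τ₀ p)))
    (hw : w = pdX (pdX fun p => τ₁ p / τ₀ p)) :
    (∀ p, 4 * pdT v p - 12 * (v p * pdX v p) - pdX (pdX (pdX v)) p = 0)
      ∧ (∀ p, 4 * pdT w p - 12 * pdX (fun q => v q * w q) p - pdX (pdX (pdX w)) p = 0) := by
  subst hA hτ hτ₀ hτ₁
  simp only [one_add_exp_dual_soliton, fst_add, fst_inl, fst_inr, snd_add, snd_inl, snd_inr,
    add_zero, zero_add] at hv hw
  rw [pdX_pdX_log_one_add_exp_solitonPhase a b] at hv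
  rw [pdX_pdX_exp_mul_div_one_add_exp_solitonPhase a b] at hw
  subst hv hw
  exact ⟨kdvLhs_sigmoidForm_solitonPhase a b, linearizedKdvLhs_sigmoidForm_solitonPhase a b⟩
end

section
/- Let v, w : ℝ² → ℝ be smooth functions of (x, t) that are 1-periodic in x (v(x+1, t) = v(x, t) and w(x+1, t) = w(x, t) for all x, t) and satisfy the coupled KdV equations. Then the functional H₁(t) = ∫₀¹ v(x, t) w(x, t) dx is constant in t. -/
open MeasureTheory Metric Set


lemma pdX_eq {f : ℝ × ℝ → ℝ} (hf : ContDiff ℝ (⊤ : ℕ∞) f) (p : ℝ × ℝ) :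
    pdX f p = fderiv ℝ f p (1, 0) :=
  (hf.differentiable (by simp) p).lineDeriv_eq_fderiv

lemma pdT_eq {f : ℝ × ℝ → ℝ} (hf : ContDiff ℝ (⊤ : ℕ∞) f) (p : ℝ × ℝ) :
    pdT f p = fderiv ℝ f p (0, 1) :=
  (hf.differentiable (by simp) p).lineDeriv_eq_fderiv

lemma contDiff_pdX {f : ℝ × ℝ → ℝ} (hf : ContDiff ℝ (⊤ : ℕ∞) f) : ContDiff ℝ (⊤ : ℕ∞) (pdX f) := by
  have h : pdX f = fun p => fderiv ℝ f p (1, 0) := funext (pdX_eq hf)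
  rw [h]
  exact (hf.fderiv_right (by simp)).clm_apply contDiff_const

lemma contDiff_pdT {f : ℝ × ℝ → ℝ} (hf : ContDiff ℝ (⊤ : ℕ∞) f) : ContDiff ℝ (⊤ : ℕ∞) (pdT f) := by
  have h : pdT f = fun p => fderiv ℝ f p (0, 1) := funext (pdT_eq hf)
  rw [h]
  exact (hf.fderiv_right (by simp)).clm_apply contDiff_const

lemma pdX_mul {f g : ℝ × ℝ → ℝ} (hf : ContDiff ℝ (⊤ : ℕ∞) f) (hg : ContDiff ℝ (⊤ : ℕ∞) g) (p : ℝ × ℝ) :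
    pdX (fun q => f q * g q) p = pdX f p * g p + f p * pdX g p := by
  rw [pdX_eq (hf.mul hg), pdX_eq hf, pdX_eq hg,
    fderiv_fun_mul (hf.differentiable (by simp) p) (hg.differentiable (by simp) p)]
  simp [smul_eq_mul]
  ring

lemma pdT_mul {f g : ℝ × ℝ → ℝ} (hf : ContDiff ℝ (⊤ : ℕ∞) f) (hg : ContDiff ℝ (⊤ : ℕ∞) g) (p : ℝ × ℝ) :
    pdT (fun q => f q * g q) p = pdT f p * g p + f p * pdT g p := by
  rw [pdT_eq (hf.mul hg), pdT_eq hf, pdT_eq hg,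
    fderiv_fun_mul (hf.differentiable (by simp) p) (hg.differentiable (by simp) p)]
  simp [smul_eq_mul]
  ring

lemma pdX_add {f g : ℝ × ℝ → ℝ} (hf : ContDiff ℝ (⊤ : ℕ∞) f) (hg : ContDiff ℝ (⊤ : ℕ∞) g) (p : ℝ × ℝ) :
    pdX (fun q => f q + g q) p = pdX f p + pdX g p := by
  rw [pdX_eq (hf.add hg), pdX_eq hf, pdX_eq hg,
    fderiv_fun_add (hf.differentiable (by simp) p) (hg.differentiable (by simp) p)]
  simp

lemma pdX_sub {f g : ℝ × ℝ → ℝ} (hf : ContDiff ℝ (⊤ : ℕ∞) f) (hg : ContDiff ℝ (⊤ : ℕ∞) g) (p : ℝ × ℝ) :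
    pdX (fun q => f q - g q) p = pdX f p - pdX g p := by
  rw [pdX_eq (hf.sub hg), pdX_eq hf, pdX_eq hg,
    fderiv_fun_sub (hf.differentiable (by simp) p) (hg.differentiable (by simp) p)]
  simp

lemma pdX_const_mul {f : ℝ × ℝ → ℝ} (hf : ContDiff ℝ (⊤ : ℕ∞) f) (c : ℝ) (p : ℝ × ℝ) :
    pdX (fun q => c * f q) p = c * pdX f p := by
  rw [pdX_eq (contDiff_const.mul hf), pdX_eq hf,
    fderiv_const_mul (hf.differentiable (by simp) p)]
  simp

lemma pdX_per {f : ℝ × ℝ → ℝ} (hf : ∀ x t : ℝ, f (x + 1, t) = f (x, t)) :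
    ∀ x t : ℝ, pdX f (x + 1, t) = pdX f (x, t) := by
  intro x t
  unfold pdX lineDeriv
  congr 1
  funext τ
  have h1 : ((x + 1, t) : ℝ × ℝ) + τ • (1, 0) = ((x + τ) + 1, t) := by
    simp [Prod.ext_iff]; ring
  have h2 : ((x, t) : ℝ × ℝ) + τ • (1, 0) = (x + τ, t) := by
    simp [Prod.ext_iff]
  rw [h1, h2, hf]

lemma hasDerivAt_sliceX {f : ℝ × ℝ → ℝ} (hf : ContDiff ℝ (⊤ : ℕ∞) f) (x t : ℝ) :
    HasDerivAt (fun y => f (y, t)) (pdX f (x, t)) x := by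
  rw [pdX_eq hf]
  exact ((hf.differentiable (by simp) (x, t)).hasFDerivAt).comp_hasDerivAt x
    ((hasDerivAt_id x).prodMk (hasDerivAt_const x t))

lemma hasDerivAt_sliceT {f : ℝ × ℝ → ℝ} (hf : ContDiff ℝ (⊤ : ℕ∞) f) (x t : ℝ) :
    HasDerivAt (fun s => f (x, s)) (pdT f (x, t)) t := by
  rw [pdT_eq hf]
  exact ((hf.differentiable (by simp) (x, t)).hasFDerivAt).comp_hasDerivAt t
    ((hasDerivAt_const t x).prodMk (hasDerivAt_id t))

/-- if smooth `v w : ℝ² → ℝ` are 1-periodic in `x` and satisfy the coupled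
KdV equations, then `H₁(t) = ∫₀¹ v w dx` is constant in `t`. -/
theorem stmt14 (v w : ℝ × ℝ → ℝ) (hv : ContDiff ℝ (⊤ : ℕ∞) v) (hw : ContDiff ℝ (⊤ : ℕ∞) w)
    (hvper : ∀ x t : ℝ, v (x + 1, t) = v (x, t))
    (hwper : ∀ x t : ℝ, w (x + 1, t) = w (x, t))
    (hkdv1 : ∀ p, 4 * pdT v p - 12 * (v p * pdX v p) - pdX (pdX (pdX v)) p = 0)
    (hkdv2 : ∀ p, 4 * pdT w p - 12 * pdX (fun q => v q * w q) p - pdX (pdX (pdX w)) p = 0) :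
    ∀ t₁ t₂ : ℝ, (∫ x in (0:ℝ)..1, v (x, t₁) * w (x, t₁))
      = ∫ x in (0:ℝ)..1, v (x, t₂) * w (x, t₂) := by
  have hvx := contDiff_pdX hv
  have hvxx := contDiff_pdX hvx
  have hvxxx := contDiff_pdX hvxx
  have hwx := contDiff_pdX hw
  have hwxx := contDiff_pdX hwx
  have hwxxx := contDiff_pdX hwxx
  have hvwC : ContDiff ℝ (⊤ : ℕ∞) (fun q => v q * w q) := hv.mul hw
  -- the flux function G
  set G : ℝ × ℝ → ℝ := fun q =>
    (12 * v q * v q * w q + w q * pdX (pdX v) q + v q * pdX (pdX w) q) - pdX v q * pdX w q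
    with hGdef
  have hA : ContDiff ℝ (⊤ : ℕ∞) (fun q => 12 * v q * v q * w q) :=
    ((contDiff_const.mul hv).mul hv).mul hw
  have hB : ContDiff ℝ (⊤ : ℕ∞) (fun q => w q * pdX (pdX v) q) := hw.mul hvxx
  have hC : ContDiff ℝ (⊤ : ℕ∞) (fun q => v q * pdX (pdX w) q) := hv.mul hwxx
  have hD : ContDiff ℝ (⊤ : ℕ∞) (fun q => pdX v q * pdX w q) := hvx.mul hwx
  have hABC : ContDiff ℝ (⊤ : ℕ∞) (fun q =>
      12 * v q * v q * w q + w q * pdX (pdX v) q + v q * pdX (pdX w) q) :=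
    (hA.add hB).add hC
  have hGC : ContDiff ℝ (⊤ : ℕ∞) G := hABC.sub hD
  -- pointwise identity: 4 ∂t(vw) = ∂x G
  have key : ∀ p, pdT (fun q => v q * w q) p = (1 / 4) * pdX G p := by
    intro p
    have eG : pdX G p =
        pdX (fun q => 12 * v q * v q * w q) p + pdX (fun q => w q * pdX (pdX v) q) p
          + pdX (fun q => v q * pdX (pdX w) q) p - pdX (fun q => pdX v q * pdX w q) p := by
      rw [hGdef]
      rw [pdX_sub hABC hD, pdX_add (hA.add hB) hC, pdX_add hA hB]
    rw [eG, pdX_mul ((contDiff_const.mul hv).mul hv) hw p,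
      pdX_mul (contDiff_const.mul hv) hv p, pdX_const_mul hv 12 p,
      pdX_mul hw hvxx p, pdX_mul hv hwxx p, pdX_mul hvx hwx p,
      pdT_mul hv hw p]
    have h2 := hkdv2 p
    rw [pdX_mul hv hw p] at h2
    have h1 := hkdv1 p
    linear_combination (w p / 4) * h1 + (v p / 4) * h2
  -- periodicity of G
  have hGper : ∀ x t : ℝ, G (x + 1, t) = G (x, t) := by
    intro x t
    have pvx := pdX_per hvper
    have pvxx := pdX_per pvx
    have pwx := pdX_per hwper
    have pwxx := pdX_per pwx
    simp only [hGdef, hvper, hwper, pvx, pvxx, pwx, pwxx]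
  -- the x-integral of ∂x G vanishes
  have hint : ∀ t : ℝ, (∫ x in (0:ℝ)..1, pdX G (x, t)) = 0 := by
    intro t
    have hd : ∀ x ∈ Set.uIcc (0:ℝ) 1, HasDerivAt (fun y => G (y, t)) (pdX G (x, t)) x :=
      fun x _ => hasDerivAt_sliceX hGC x t
    have hcont : Continuous (fun x => pdX G (x, t)) :=
      (contDiff_pdX hGC).continuous.comp (continuous_id.prodMk continuous_const)
    rw [intervalIntegral.integral_eq_sub_of_hasDerivAt hd
      (hcont.intervalIntegrable 0 1)]
    have : G (1, t) = G (0, t) := by simpa using hGper 0 t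
    rw [this, sub_self]
  -- differentiation under the integral sign
  have hF : ∀ t₀ : ℝ, HasDerivAt (fun t => ∫ x in (0:ℝ)..1, v (x, t) * w (x, t)) 0 t₀ := by
    intro t₀
    have hcontT : Continuous (pdT (fun q => v q * w q)) := (contDiff_pdT hvwC).continuous
    obtain ⟨Cb, hCb⟩ := (isCompact_Icc.prod isCompact_Icc :
        IsCompact (Icc (0:ℝ) 1 ×ˢ Icc (t₀ - 1) (t₀ + 1))).exists_bound_of_continuousOn
      hcontT.continuousOn
    have main := intervalIntegral.hasDerivAt_integral_of_dominated_loc_of_deriv_le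
      (F := fun t x => v (x, t) * w (x, t))
      (F' := fun t x => pdT (fun q => v q * w q) (x, t))
      (μ := MeasureTheory.volume) (x₀ := t₀) (a := (0:ℝ)) (b := 1) (bound := fun _ => Cb) (s := ball t₀ 1) (ball_mem_nhds t₀ one_pos)
      (Filter.Eventually.of_forall fun t =>
        ((hvwC.continuous.comp (continuous_id.prodMk continuous_const)).aestronglyMeasurable))
      ((hvwC.continuous.comp (continuous_id.prodMk continuous_const)).intervalIntegrable 0 1)
      ((hcontT.comp (continuous_id.prodMk continuous_const)).aestronglyMeasurable)
      (Filter.Eventually.of_forall ?_) intervalIntegrable_const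
      (Filter.Eventually.of_forall ?_)
    · have hzero : (∫ x in (0:ℝ)..1, pdT (fun q => v q * w q) (x, t₀)) = 0 := by
        rw [intervalIntegral.integral_congr (g := fun x => (1/4) * pdX G (x, t₀))
          (fun x _ => key (x, t₀)),
          intervalIntegral.integral_const_mul, hint t₀, mul_zero]
      rw [hzero] at main
      exact main.2
    · intro x hx t ht
      have hx' : x ∈ Icc (0:ℝ) 1 := by
        rw [Set.uIoc_of_le (by norm_num : (0:ℝ) ≤ 1)] at hx
        exact ⟨hx.1.le, hx.2⟩
      have ht' : t ∈ Icc (t₀ - 1) (t₀ + 1) := by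
        rw [Real.ball_eq_Ioo] at ht
        exact ⟨ht.1.le, ht.2.le⟩
      exact hCb (x, t) ⟨hx', ht'⟩
    · intro x _ t _
      exact hasDerivAt_sliceT hvwC x t
  intro t₁ t₂
  exact is_const_of_deriv_eq_zero (fun t => (hF t).differentiableAt)
    (fun t => (hF t).deriv) t₁ t₂
end
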